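/- arXiv:math/0207148 — 3 statements merged into one kernel-verified Lean document; each statement's English description precedes it below -/
import Mathlib

section
/- For functions l, r : ℝ → ℝ with (1+x²)²l and (1+x²)²r bounded in appropriate norms, the integral υ(X,T) = ε⁻² ∫₀^T l(X) r(X − 2sε⁻²) ds satisfies the pointwise bound (1+X²)|υ(X,T)| ≤ C ‖(1+·²)² l‖_∞ ‖(1+·²)² r‖_∞ · arctan(2Tε⁻²), uniformly in ε > 0. -/
/-!
The two counter-propagating profiles decay like `(1 + x²)⁻²`, and the elementary inequality
`1 + (x - y)² ≤ 2 (1 + x²)(1 + y²)` turns the product `l X · r (X - 2s/ε²)` into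
`2 Ml Mr / ((1 + X²)(1 + (2s/ε²)²))`. The remaining time integral is an arctangent:
`ε⁻² ∫₀^T ds / (1 + (2s/ε²)²) = ½ arctan (2T/ε²)`, which absorbs the prefactor `ε⁻²`.
-/

open MeasureTheory Real Set

lemma one_add_sub_sq_le (x y : ℝ) : 1 + (x - y) ^ 2 ≤ 2 * ((1 + x ^ 2) * (1 + y ^ 2)) := by
  nlinarith [sq_nonneg (x + y), sq_nonneg (x * y)]

lemma one_add_sq_mul_one_add_sub_sq_mul_abs_mul_le {x y a b Ma Mb : ℝ}
    (ha : (1 + x ^ 2) ^ 2 * |a| ≤ Ma) (hb : (1 + y ^ 2) * |b| ≤ Mb) :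
    (1 + x ^ 2) * (1 + (x - y) ^ 2) * |a * b| ≤ 2 * Ma * Mb :=
  calc (1 + x ^ 2) * (1 + (x - y) ^ 2) * |a * b|
      ≤ (1 + x ^ 2) * (2 * ((1 + x ^ 2) * (1 + y ^ 2))) * |a * b| := by
        gcongr; exact one_add_sub_sq_le x y
    _ = 2 * ((1 + x ^ 2) ^ 2 * |a|) * ((1 + y ^ 2) * |b|) := by rw [abs_mul]; ring
    _ ≤ 2 * Ma * Mb := by
        have hMa : 0 ≤ Ma := (by positivity : (0 : ℝ) ≤ (1 + x ^ 2) ^ 2 * |a|).trans ha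
        gcongr

lemma integral_one_div_one_add_mul_sq {c : ℝ} (hc : c ≠ 0) (T : ℝ) :
    ∫ s in (0 : ℝ)..T, 1 / (1 + (c * s) ^ 2) = arctan (c * T) / c := by
  rw [intervalIntegral.integral_comp_mul_left (fun x => 1 / (1 + x ^ 2)) hc,
    integral_one_div_one_add_sq, mul_zero, arctan_zero, sub_zero, smul_eq_mul, inv_mul_eq_div]

lemma abs_integral_le_of_abs_le_div_one_add_mul_sq {f : ℝ → ℝ} {c K T : ℝ} (hc : 0 < c)
    (hT : 0 ≤ T) (hf : ∀ s ∈ Ioc 0 T, |f s| ≤ K / (1 + (c * s) ^ 2)) :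
    |∫ s in (0 : ℝ)..T, f s| ≤ K * arctan (c * T) / c := by
  have hg : IntervalIntegrable (fun s => K / (1 + (c * s) ^ 2)) volume 0 T :=
    (continuous_const.div (by fun_prop) fun s => by positivity).intervalIntegrable _ _
  calc |∫ s in (0 : ℝ)..T, f s| ≤ ∫ s in (0 : ℝ)..T, K / (1 + (c * s) ^ 2) :=
        intervalIntegral.norm_integral_le_of_norm_le (f := f) hT (ae_of_all _ hf) hg
    _ = K * arctan (c * T) / c := by
        simp_rw [div_eq_mul_one_div K]
        rw [intervalIntegral.integral_const_mul, integral_one_div_one_add_mul_sq hc.ne',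
          mul_div_assoc']

/-- For `l, r : ℝ → ℝ` with `(1+x²)²l`, `(1+x²)²r` bounded (by `Ml`, `Mr`),
the integral `υ(X,T) = ε⁻² ∫₀^T l(X) r(X − 2sε⁻²) ds` satisfies the pointwise bound
`(1+X²)|υ(X,T)| ≤ C Ml Mr arctan(2Tε⁻²)`, uniformly in `ε > 0`. -/
theorem interaction_integral_pointwise_bound :
    ∃ C : ℝ, 0 < C ∧ ∀ (l r : ℝ → ℝ) (Ml Mr : ℝ),
      Continuous l → Continuous r →
      (∀ x : ℝ, (1 + x^2)^2 * |l x| ≤ Ml) →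
      (∀ x : ℝ, (1 + x^2)^2 * |r x| ≤ Mr) →
      ∀ ε > (0:ℝ), ∀ T ≥ (0:ℝ), ∀ X : ℝ,
        (1 + X^2) * |(ε^2)⁻¹ * ∫ s in (0:ℝ)..T, l X * r (X - 2*s/ε^2)|
          ≤ C * Ml * Mr * Real.arctan (2*T/ε^2) := by
  refine ⟨1, one_pos, fun l r Ml Mr _ _ hl hr ε hε T hT X => ?_⟩
  have hc : 0 < 2 / ε ^ 2 := by positivity
  have hr' (y : ℝ) : (1 + y ^ 2) * |r y| ≤ Mr :=
    (mul_le_mul_of_nonneg_right (le_self_pow₀ (by nlinarith) two_ne_zero) (abs_nonneg _)).trans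
      (hr y)
  have hpointwise (s : ℝ) :
      |l X * r (X - 2 * s / ε ^ 2)| ≤ 2 * Ml * Mr / (1 + X ^ 2) / (1 + (2 / ε ^ 2 * s) ^ 2) := by
    have h := one_add_sq_mul_one_add_sub_sq_mul_abs_mul_le (hl X) (hr' (X - 2 * s / ε ^ 2))
    rw [show X - (X - 2 * s / ε ^ 2) = 2 / ε ^ 2 * s by ring] at h
    rw [le_div_iff₀ (by positivity), le_div_iff₀ (by positivity)]
    linarith
  have hintegral := abs_integral_le_of_abs_le_div_one_add_mul_sq hc hT fun s _ => hpointwise s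
  calc (1 + X ^ 2) * |(ε ^ 2)⁻¹ * ∫ s in (0:ℝ)..T, l X * r (X - 2 * s / ε ^ 2)|
      = (1 + X ^ 2) * (ε ^ 2)⁻¹ * |∫ s in (0:ℝ)..T, l X * r (X - 2 * s / ε ^ 2)| := by
        rw [abs_mul, abs_of_pos (by positivity : (0 : ℝ) < (ε ^ 2)⁻¹), mul_assoc]
    _ ≤ (1 + X ^ 2) * (ε ^ 2)⁻¹ *
          (2 * Ml * Mr / (1 + X ^ 2) * arctan (2 / ε ^ 2 * T) / (2 / ε ^ 2)) := by
        gcongr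
    _ = 1 * Ml * Mr * arctan (2 * T / ε ^ 2) := by
        rw [div_mul_eq_mul_div]
        field_simp
end

section
/- For s > 3/2 (s an integer), if u ∈ H^s(ℝ), then for all f ∈ H^{s+1}(ℝ), the inner product ⟨u ∂_x f, f⟩_{H^s} satisfies |⟨u ∂_x f, f⟩_{H^s}| ≤ C ‖u‖_{H^s} ‖f‖²_{H^s}, with C independent of u and f. -/
open MeasureTheory Real

/-- The `H^s(ℝ)` Sobolev inner product (integer `s`). -/
noncomputable def Hinner (s : ℕ) (f g : ℝ → ℝ) : ℝ :=
  ∑ j ∈ Finset.range (s + 1), ∫ x : ℝ, iteratedDeriv j f x * iteratedDeriv j g x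

/-- The `H^s(ℝ)` Sobolev norm (integer `s`). -/
noncomputable def Hnorm (s : ℕ) (f : ℝ → ℝ) : ℝ :=
  Real.sqrt (∑ j ∈ Finset.range (s + 1), ∫ x : ℝ, (iteratedDeriv j f x) ^ 2)


lemma contDiff_iteratedDeriv {g : ℝ → ℝ} (hg : ContDiff ℝ (⊤:ℕ∞) g) (n : ℕ) :
    ContDiff ℝ (⊤:ℕ∞) (iteratedDeriv n g) := by
  rw [iteratedDeriv_eq_iterate]; exact hg.iterate_deriv n

lemma hcs_iteratedDeriv {g : ℝ → ℝ} (hg : HasCompactSupport g) (n : ℕ) :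
    HasCompactSupport (iteratedDeriv n g) := by
  rw [iteratedDeriv_eq_iterate]
  induction n with
  | zero => simpa using hg
  | succ n ih => rw [Function.iterate_succ']; exact ih.deriv

-- integral of a derivative of a compactly supported C¹ function vanishes
lemma integral_deriv_zero {F : ℝ → ℝ} (hF : ContDiff ℝ 1 F) (hcs : HasCompactSupport F) :
    ∫ x : ℝ, deriv F x = 0 := by
  have h1 : ∫ x in Set.Iic 0, deriv F x = F 0 := hcs.integral_Iic_deriv_eq hF 0
  have h2 : ∫ x in Set.Ioi 0, deriv F x = - F 0 := hcs.integral_Ioi_deriv_eq hF 0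
  have hint : Integrable (deriv F) :=
    (hF.continuous_deriv le_rfl).integrable_of_hasCompactSupport hcs.deriv
  rw [← intervalIntegral.integral_Iic_add_Ioi (b := (0:ℝ)) hint.integrableOn hint.integrableOn, h1, h2]
  ring

-- Cauchy–Schwarz for integrals of continuous compactly supported functions
lemma cauchy_schwarz {a b : ℝ → ℝ} (ha : Continuous a) (hb : Continuous b)
    (hca : HasCompactSupport a) (hcb : HasCompactSupport b) :
    |∫ x : ℝ, a x * b x| ≤ Real.sqrt (∫ x : ℝ, a x ^ 2) * Real.sqrt (∫ x : ℝ, b x ^ 2) := by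
  set A := ∫ x : ℝ, a x ^ 2 with hA
  set B := ∫ x : ℝ, b x ^ 2 with hB
  set I := ∫ x : ℝ, a x * b x with hI
  have hAi : Integrable (fun x => a x ^ 2) :=
    ((ha.mul ha).integrable_of_hasCompactSupport (hca.mul_left (f := a))).congr
      (by filter_upwards with x; rw [sq]; rfl)
  have hBi : Integrable (fun x => b x ^ 2) :=
    ((hb.mul hb).integrable_of_hasCompactSupport (hcb.mul_left (f := b))).congr
      (by filter_upwards with x; rw [sq]; rfl)
  have hIi : Integrable (fun x => a x * b x) :=
    (ha.mul hb).integrable_of_hasCompactSupport (hcb.mul_left (f := a))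
  have hA0 : 0 ≤ A := integral_nonneg fun x => sq_nonneg _
  have hB0 : 0 ≤ B := integral_nonneg fun x => sq_nonneg _
  have key : I ^ 2 ≤ A * B := by
    have hq : ∀ t : ℝ, 0 ≤ A * (t * t) + (2 * I) * t + B := by
      intro t
      have : 0 ≤ ∫ x : ℝ, (t * a x + b x) ^ 2 := integral_nonneg fun x => sq_nonneg _
      calc (0:ℝ) ≤ ∫ x : ℝ, (t * a x + b x) ^ 2 := this
        _ = A * (t * t) + (2 * I) * t + B := by
            have : (fun x => (t * a x + b x) ^ 2)
                = fun x => (t * t) * a x ^ 2 + (2 * t) * (a x * b x) + b x ^ 2 := by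
              funext x; ring
            rw [this]
            have e1 := integral_add (μ := volume) ((hAi.const_mul (t*t)).add (hIi.const_mul (2*t))) hBi
            have e2 := integral_add (μ := volume) (hAi.const_mul (t*t)) (hIi.const_mul (2*t))
            simp only [Pi.add_apply] at e1 e2
            rw [e1, e2, integral_const_mul, integral_const_mul]
            ring
    have hd := discrim_le_zero hq
    rw [discrim] at hd
    nlinarith
  have : |I| = Real.sqrt (I ^ 2) := (Real.sqrt_sq_eq_abs I).symm
  rw [this, ← Real.sqrt_mul hA0]
  exact Real.sqrt_le_sqrt key

lemma sq_integrable {g : ℝ → ℝ} (hg : Continuous g) (hcs : HasCompactSupport g) :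
    Integrable (fun x => g x ^ 2) :=
  ((hg.mul hg).integrable_of_hasCompactSupport (hcs.mul_left (f := g))).congr
    (by filter_upwards with x; rw [sq]; rfl)

lemma cauchy_schwarz_abs {a b : ℝ → ℝ} (ha : Continuous a) (hb : Continuous b)
    (hca : HasCompactSupport a) (hcb : HasCompactSupport b) :
    (∫ x : ℝ, |a x * b x|) ≤ Real.sqrt (∫ x : ℝ, a x ^ 2) * Real.sqrt (∫ x : ℝ, b x ^ 2) := by
  have haa : HasCompactSupport (fun x => |a x|) := hca.comp_left (g := abs) abs_zero
  have hbb : HasCompactSupport (fun x => |b x|) := hcb.comp_left (g := abs) abs_zero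
  have h := cauchy_schwarz (a := fun x => |a x|) (b := fun x => |b x|)
    ha.abs hb.abs haa hbb
  simp only [sq_abs] at h
  calc (∫ x : ℝ, |a x * b x|) = |(∫ x : ℝ, |a x| * |b x|)| := by
        rw [abs_of_nonneg (integral_nonneg fun x => mul_nonneg (abs_nonneg _) (abs_nonneg _))]
        congr 1; funext x; rw [abs_mul]
    _ ≤ _ := h

lemma sup_bound {g : ℝ → ℝ} (hg : ContDiff ℝ (⊤:ℕ∞) g) (hcs : HasCompactSupport g) (x : ℝ) :
    |g x| ≤ Real.sqrt ((∫ y : ℝ, g y ^ 2) + ∫ y : ℝ, deriv g y ^ 2) := by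
  have hg' : Continuous (deriv g) := (hg.continuous_deriv (by exact_mod_cast le_top))
  have hF : ContDiff ℝ 1 (fun y => g y ^ 2) := (hg.of_le (by exact_mod_cast le_top)).pow 2
  have hsq : (fun y : ℝ => g y ^ 2) = fun y => g y * g y := by funext y; rw [sq]
  have hFcs : HasCompactSupport (fun y => g y ^ 2) := by
    rw [hsq]; exact hcs.mul_left (f := g)
  have hderivF : ∀ y, deriv (fun y => g y ^ 2) y = 2 * g y * deriv g y := by
    intro y
    have hd : DifferentiableAt ℝ g y :=
      (hg.differentiable (by simp)).differentiableAt
    rw [hsq, deriv_fun_mul hd hd]; ring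
  have key : g x ^ 2 = ∫ y in Set.Iic x, deriv (fun y => g y ^ 2) y :=
    (hFcs.integral_Iic_deriv_eq hF x).symm
  have hint : Integrable (fun y : ℝ => g y ^ 2 + deriv g y ^ 2) :=
    (sq_integrable (hg.continuous) hcs).add (sq_integrable hg' hcs.deriv)
  have hb1 : g x ^ 2 ≤ ∫ y : ℝ, (g y ^ 2 + deriv g y ^ 2) := by
    rw [key]
    have step1 : ∫ y in Set.Iic x, deriv (fun y => g y ^ 2) y
        ≤ ∫ y in Set.Iic x, (g y ^ 2 + deriv g y ^ 2) := by
      apply setIntegral_mono_on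
      · have : Integrable (deriv (fun y => g y ^ 2)) :=
          (hF.continuous_deriv le_rfl).integrable_of_hasCompactSupport hFcs.deriv
        exact this.integrableOn
      · exact hint.integrableOn
      · exact measurableSet_Iic
      · intro y _
        rw [hderivF y]
        nlinarith [sq_nonneg (g y - deriv g y)]
    have step2 : ∫ y in Set.Iic x, (g y ^ 2 + deriv g y ^ 2)
        ≤ ∫ y : ℝ, (g y ^ 2 + deriv g y ^ 2) :=
      setIntegral_le_integral hint
        (by filter_upwards with y; positivity)
    linarith
  have := Real.sqrt_le_sqrt hb1
  rw [Real.sqrt_sq_eq_abs] at this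
  calc |g x| ≤ Real.sqrt (∫ y : ℝ, (g y ^ 2 + deriv g y ^ 2)) := this
    _ = _ := by
        rw [integral_add (sq_integrable (hg.continuous) hcs) (sq_integrable hg' hcs.deriv)]

lemma choose_sum_id (n : ℕ) (A B : ℕ → ℝ) :
    ∑ k ∈ Finset.range (n+1), (n.choose k : ℝ) * (A (k+1) * B (n-k) + A k * B (n-k+1))
      = ∑ k ∈ Finset.range (n+2), ((n+1).choose k : ℝ) * (A k * B (n+1-k)) := by
  have hR : ∑ k ∈ Finset.range (n+2), ((n+1).choose k : ℝ) * (A k * B (n+1-k))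
      = (∑ k ∈ Finset.range (n+1), ((n+1).choose (k+1) : ℝ) * (A (k+1) * B (n-k)))
        + A 0 * B (n+1) := by
    rw [Finset.sum_range_succ' (fun k => ((n+1).choose k : ℝ) * (A k * B (n+1-k))) (n+1)]
    congr 1
    · apply Finset.sum_congr rfl; intro k hk
      congr 3
      omega
    · simp
  rw [hR]
  have hsplit : ∑ k ∈ Finset.range (n+1),
      (n.choose k : ℝ) * (A (k+1) * B (n-k) + A k * B (n-k+1))
      = (∑ k ∈ Finset.range (n+1), (n.choose k : ℝ) * (A (k+1) * B (n-k)))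
        + ∑ k ∈ Finset.range (n+1), (n.choose k : ℝ) * (A k * B (n-k+1)) := by
    rw [← Finset.sum_add_distrib]
    apply Finset.sum_congr rfl; intro k _; ring
  rw [hsplit]
  have hP : ∀ k, ((n+1).choose (k+1) : ℝ) = (n.choose k : ℝ) + (n.choose (k+1) : ℝ) := by
    intro k; rw [Nat.choose_succ_succ]; push_cast; ring
  have hRHS : (∑ k ∈ Finset.range (n+1), ((n+1).choose (k+1) : ℝ) * (A (k+1) * B (n-k)))
      = (∑ k ∈ Finset.range (n+1), (n.choose k : ℝ) * (A (k+1) * B (n-k)))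
        + ∑ k ∈ Finset.range (n+1), (n.choose (k+1) : ℝ) * (A (k+1) * B (n-k)) := by
    rw [← Finset.sum_add_distrib]
    apply Finset.sum_congr rfl; intro k _; rw [hP]; ring
  rw [hRHS]
  have hlast : ∑ k ∈ Finset.range (n+1), (n.choose k : ℝ) * (A k * B (n-k+1))
      = (∑ k ∈ Finset.range (n+1), (n.choose (k+1) : ℝ) * (A (k+1) * B (n-k)))
        + A 0 * B (n+1) := by
    rw [Finset.sum_range_succ' (fun k => (n.choose k : ℝ) * (A k * B (n-k+1))) n,
      Finset.sum_range_succ (fun k => (n.choose (k+1) : ℝ) * (A (k+1) * B (n-k))) n]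
    have : (n.choose (n+1) : ℝ) = 0 := by
      rw [Nat.choose_eq_zero_of_lt (by omega)]; simp
    rw [this]
    simp only [Nat.choose_zero_right, Nat.cast_one, Nat.sub_zero, zero_mul, add_zero, one_mul]
    congr 1
    apply Finset.sum_congr rfl; intro k hk
    have hk' : k < n := Finset.mem_range.mp hk
    congr 3
    omega
  rw [hlast]
  ring

lemma leibniz {u v : ℝ → ℝ} (hu : ContDiff ℝ (⊤:ℕ∞) u) (hv : ContDiff ℝ (⊤:ℕ∞) v) (n : ℕ) :
    iteratedDeriv n (fun y => u y * v y)
      = fun x => ∑ k ∈ Finset.range (n+1),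
          (n.choose k : ℝ) * (iteratedDeriv k u x * iteratedDeriv (n-k) v x) := by
  induction n with
  | zero => funext x; simp [iteratedDeriv_zero]
  | succ n ih =>
    funext x
    rw [iteratedDeriv_succ, ih]
    have hdiff : ∀ m, ∀ y : ℝ, DifferentiableAt ℝ (iteratedDeriv m u) y := fun m y =>
      ((contDiff_iteratedDeriv hu m).differentiable (by simp)).differentiableAt
    have hdiffv : ∀ m, ∀ y : ℝ, DifferentiableAt ℝ (iteratedDeriv m v) y := fun m y =>
      ((contDiff_iteratedDeriv hv m).differentiable (by simp)).differentiableAt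
    have hterm : ∀ k, deriv (fun y => (n.choose k : ℝ) *
        (iteratedDeriv k u y * iteratedDeriv (n-k) v y)) x
        = (n.choose k : ℝ) * (iteratedDeriv (k+1) u x * iteratedDeriv (n-k) v x
            + iteratedDeriv k u x * iteratedDeriv (n-k+1) v x) := by
      intro k
      rw [deriv_const_mul _ (d := fun y => iteratedDeriv k u y * iteratedDeriv (n-k) v y) ((hdiff k x).mul (hdiffv (n-k) x)),
        deriv_fun_mul (hdiff k x) (hdiffv (n-k) x),
        ← iteratedDeriv_succ, ← iteratedDeriv_succ]
    have hds : deriv (fun y => ∑ k ∈ Finset.range (n+1),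
        (n.choose k : ℝ) * (iteratedDeriv k u y * iteratedDeriv (n-k) v y)) x
        = ∑ k ∈ Finset.range (n+1), deriv (fun y =>
            (n.choose k : ℝ) * (iteratedDeriv k u y * iteratedDeriv (n-k) v y)) x := by
      apply deriv_fun_sum
      intro k _
      exact ((hdiff k x).mul (hdiffv (n-k) x)).const_mul _
    rw [hds]
    simp only [hterm]
    exact choose_sum_id n (fun m => iteratedDeriv m u x) (fun m => iteratedDeriv m v x)

lemma ibp {u g : ℝ → ℝ} (hu : ContDiff ℝ (⊤:ℕ∞) u) (hcu : HasCompactSupport u)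
    (hg : ContDiff ℝ (⊤:ℕ∞) g) (hcg : HasCompactSupport g) :
    ∫ x : ℝ, u x * (deriv g x * g x) = -(1/2) * ∫ x : ℝ, deriv u x * g x ^ 2 := by
  have hgc : Continuous g := hg.continuous
  have hg' : Continuous (deriv g) := hg.continuous_deriv (by exact_mod_cast le_top)
  have hu' : Continuous (deriv u) := hu.continuous_deriv (by exact_mod_cast le_top)
  have hF : ContDiff ℝ 1 (fun x => u x * g x ^ 2) :=
    (hu.of_le (by exact_mod_cast le_top)).mul ((hg.of_le (by exact_mod_cast le_top)).pow 2)
  have hFcs : HasCompactSupport (fun x => u x * g x ^ 2) := by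
    have : HasCompactSupport (fun x => g x ^ 2) := by
      have h2 : (fun x : ℝ => g x ^ 2) = fun x => g x * g x := by funext x; rw [sq]
      rw [h2]; exact hcg.mul_left (f := g)
    exact this.mul_left (f := u)
  have hzero := integral_deriv_zero hF hFcs
  have hderiv : ∀ x, deriv (fun x => u x * g x ^ 2) x
      = deriv u x * g x ^ 2 + 2 * (u x * (deriv g x * g x)) := by
    intro x
    have hdu : DifferentiableAt ℝ u x :=
      (hu.differentiable (by simp)).differentiableAt
    have hdg : DifferentiableAt ℝ g x :=
      (hg.differentiable (by simp)).differentiableAt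
    have h2 : (fun x : ℝ => u x * g x ^ 2) = fun x => u x * (g x * g x) := by
      funext y; rw [sq]
    rw [h2, deriv_fun_mul hdu (d := fun y => g y * g y) (hdg.mul hdg), deriv_fun_mul hdg hdg]
    ring
  have hi1 : Integrable (fun x => deriv u x * g x ^ 2) := by
    have : HasCompactSupport (fun x : ℝ => g x ^ 2) := by
      have h2 : (fun x : ℝ => g x ^ 2) = fun x => g x * g x := by funext x; rw [sq]
      rw [h2]; exact hcg.mul_left (f := g)
    exact (hu'.mul (hgc.pow 2)).integrable_of_hasCompactSupport (this.mul_left (f := deriv u))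
  have hi2 : Integrable (fun x => u x * (deriv g x * g x)) :=
    (hu.continuous.mul (hg'.mul hgc)).integrable_of_hasCompactSupport
      ((hcg.mul_left (f := deriv g)).mul_left (f := u))
  have : (∫ x : ℝ, deriv u x * g x ^ 2) + 2 * ∫ x : ℝ, u x * (deriv g x * g x) = 0 := by
    have heq : (fun x => deriv (fun x => u x * g x ^ 2) x)
        = fun x => deriv u x * g x ^ 2 + 2 * (u x * (deriv g x * g x)) := by
      funext x; exact hderiv x
    rw [heq] at hzero
    rw [integral_add hi1 (hi2.const_mul 2), integral_const_mul] at hzero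
    linarith
  linarith

lemma tri {a b c : ℝ → ℝ} {M : ℝ} (ha : Continuous a) (hb : Continuous b) (hc : Continuous c)
    (hcb : HasCompactSupport b) (hcc : HasCompactSupport c) (hM : ∀ x, |a x| ≤ M) :
    |∫ x : ℝ, a x * (b x * c x)|
      ≤ M * (Real.sqrt (∫ x : ℝ, b x ^ 2) * Real.sqrt (∫ x : ℝ, c x ^ 2)) := by
  have hM0 : 0 ≤ M := le_trans (abs_nonneg _) (hM 0)
  have hibc : Integrable (fun x => b x * c x) :=
    (hb.mul hc).integrable_of_hasCompactSupport (hcc.mul_left (f := b))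
  have hiabc : Integrable (fun x => a x * (b x * c x)) :=
    (ha.mul (hb.mul hc)).integrable_of_hasCompactSupport
      ((hcc.mul_left (f := b)).mul_left (f := a))
  have h1 : |∫ x : ℝ, a x * (b x * c x)| ≤ ∫ x : ℝ, |a x * (b x * c x)| := by
    simpa only [Real.norm_eq_abs] using
      norm_integral_le_integral_norm (μ := volume) (fun x => a x * (b x * c x))
  have h2 : (∫ x : ℝ, |a x * (b x * c x)|) ≤ ∫ x : ℝ, M * |b x * c x| := by
    apply integral_mono hiabc.abs (hibc.abs.const_mul M)
    intro x
    show |a x * (b x * c x)| ≤ M * |b x * c x|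
    rw [abs_mul]
    exact mul_le_mul_of_nonneg_right (hM x) (abs_nonneg _)
  rw [integral_const_mul] at h2
  have h3 := cauchy_schwarz_abs hb hc hcb hcc
  calc |∫ x : ℝ, a x * (b x * c x)| ≤ M * ∫ x : ℝ, |b x * c x| := le_trans h1 h2
    _ ≤ _ := mul_le_mul_of_nonneg_left h3 hM0

lemma Hnorm_nonneg (s : ℕ) (f : ℝ → ℝ) : 0 ≤ Hnorm s f := Real.sqrt_nonneg _

lemma sq_Hnorm (s : ℕ) (f : ℝ → ℝ) :
    (Hnorm s f) ^ 2 = ∑ j ∈ Finset.range (s + 1), ∫ x : ℝ, (iteratedDeriv j f x) ^ 2 := by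
  rw [Hnorm, Real.sq_sqrt]
  exact Finset.sum_nonneg fun j _ => integral_nonneg fun x => sq_nonneg _

lemma term_le_sq_Hnorm {s j : ℕ} (hj : j ≤ s) (f : ℝ → ℝ) :
    (∫ x : ℝ, (iteratedDeriv j f x) ^ 2) ≤ (Hnorm s f) ^ 2 := by
  rw [sq_Hnorm]
  exact Finset.single_le_sum (f := fun j => ∫ x : ℝ, (iteratedDeriv j f x) ^ 2)
    (fun i _ => integral_nonneg fun x => sq_nonneg _) (Finset.mem_range.mpr (by omega))

lemma L2_le_Hnorm {s j : ℕ} (hj : j ≤ s) (f : ℝ → ℝ) :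
    Real.sqrt (∫ x : ℝ, (iteratedDeriv j f x) ^ 2) ≤ Hnorm s f := by
  have h := term_le_sq_Hnorm hj f
  have := Real.sqrt_le_sqrt h
  rwa [Real.sqrt_sq (Hnorm_nonneg s f)] at this

lemma supD_le_Hnorm {g : ℝ → ℝ} (hg : ContDiff ℝ (⊤:ℕ∞) g) (hcg : HasCompactSupport g)
    {k s : ℕ} (hks : k + 1 ≤ s) (x : ℝ) : |iteratedDeriv k g x| ≤ Hnorm s g := by
  have h1 := sup_bound (contDiff_iteratedDeriv hg k) (hcs_iteratedDeriv hcg k) x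
  rw [show deriv (iteratedDeriv k g) = iteratedDeriv (k+1) g from (iteratedDeriv_succ).symm] at h1
  refine le_trans h1 ?_
  rw [Hnorm]
  apply Real.sqrt_le_sqrt
  have hsub : ({k, k+1} : Finset ℕ) ⊆ Finset.range (s+1) := by
    intro i hi
    simp only [Finset.mem_insert, Finset.mem_singleton] at hi
    rcases hi with rfl | rfl <;> exact Finset.mem_range.mpr (by omega)
  calc (∫ y : ℝ, iteratedDeriv k g y ^ 2) + ∫ y : ℝ, iteratedDeriv (k+1) g y ^ 2
      = ∑ j ∈ ({k, k+1} : Finset ℕ), ∫ y : ℝ, iteratedDeriv j g y ^ 2 := by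
        rw [Finset.sum_pair (by omega)]
    _ ≤ _ := Finset.sum_le_sum_of_subset_of_nonneg hsub
        (fun i _ _ => integral_nonneg fun y => sq_nonneg _)


/-- For integer `s > 3/2`, the inner product `⟨u ∂_x f, f⟩_{H^s}` satisfies
`|⟨u ∂_x f, f⟩_{H^s}| ≤ C ‖u‖_{H^s} ‖f‖²_{H^s}`, with `C` independent of `u` and `f`. -/
theorem inner_prod_transport_estimate (s : ℕ) (hs : (3:ℝ)/2 < (s:ℝ)) :
    ∃ C : ℝ, ∀ u f : ℝ → ℝ,
      ContDiff ℝ (⊤ : ℕ∞) u → HasCompactSupport u →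
      ContDiff ℝ (⊤ : ℕ∞) f → HasCompactSupport f →
      |Hinner s (fun x => u x * deriv f x) f| ≤ C * Hnorm s u * (Hnorm s f)^2 := by
  have hs2 : 2 ≤ s := by
    by_contra h
    push_neg at h
    have : (s:ℝ) ≤ 1 := by exact_mod_cast Nat.lt_succ_iff.mp h
    linarith
  refine ⟨∑ j ∈ Finset.range (s+1), ∑ k ∈ Finset.range (j+1), (j.choose k : ℝ), ?_⟩
  intro u f hu0 hcu hf0 hcf
  have hu : ContDiff ℝ (⊤:ℕ∞) u := hu0.of_le (by simp)
  have hf : ContDiff ℝ (⊤:ℕ∞) f := hf0.of_le (by simp)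
  have hf' : ContDiff ℝ (⊤:ℕ∞) (deriv f) := by
    have := contDiff_iteratedDeriv hf 1
    rwa [iteratedDeriv_one] at this
  have cDu : ∀ k, Continuous (iteratedDeriv k u) :=
    fun k => (contDiff_iteratedDeriv hu k).continuous
  have cDf : ∀ k, Continuous (iteratedDeriv k f) :=
    fun k => (contDiff_iteratedDeriv hf k).continuous
  have sDu : ∀ k, HasCompactSupport (iteratedDeriv k u) := hcs_iteratedDeriv hcu
  have sDf : ∀ k, HasCompactSupport (iteratedDeriv k f) := hcs_iteratedDeriv hcf
  set Nu := Hnorm s u with hNu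
  set Nf := Hnorm s f with hNf
  have hNu0 : 0 ≤ Nu := Hnorm_nonneg s u
  have hNf0 : 0 ≤ Nf := Hnorm_nonneg s f
  -- per-term bound
  have key : ∀ j ≤ s, ∀ k ≤ j,
      |∫ x : ℝ, iteratedDeriv k u x * (iteratedDeriv (j-k+1) f x * iteratedDeriv j f x)|
        ≤ Nu * Nf^2 := by
    intro j hj k hk
    by_cases hcase : j = s ∧ k = 0
    · obtain ⟨hj1, hk0⟩ := hcase
      subst hj1; subst hk0
      have heq : (fun x => iteratedDeriv 0 u x *
            (iteratedDeriv (j-0+1) f x * iteratedDeriv j f x))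
          = fun x => u x * (deriv (iteratedDeriv j f) x * iteratedDeriv j f x) := by
        funext x
        rw [iteratedDeriv_zero, Nat.sub_zero, ← iteratedDeriv_succ]
      rw [heq, ibp hu hcu (contDiff_iteratedDeriv hf j) (sDf j)]
      rw [abs_mul]
      have habs : |(-(1/2) : ℝ)| = 1/2 := by norm_num
      rw [habs]
      have hb : |∫ x : ℝ, deriv u x * iteratedDeriv j f x ^ 2| ≤ Nu * Nf ^ 2 := by
        have heq2 : (fun x => deriv u x * iteratedDeriv j f x ^ 2)
            = fun x => deriv u x * (iteratedDeriv j f x * iteratedDeriv j f x) := by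
          funext x; rw [sq]
        rw [heq2]
        have hsup : ∀ x, |deriv u x| ≤ Nu := by
          intro x
          have := supD_le_Hnorm hu hcu (k := 1) (s := j) (by omega) x
          rwa [iteratedDeriv_one] at this
        have htri := tri (hu.continuous_deriv (by exact_mod_cast le_top)) (cDf j) (cDf j)
          (sDf j) (sDf j) hsup
        refine le_trans htri ?_
        have h1 : Real.sqrt (∫ x : ℝ, iteratedDeriv j f x ^ 2) ≤ Nf := L2_le_Hnorm hj f
        have h0 : 0 ≤ Real.sqrt (∫ x : ℝ, iteratedDeriv j f x ^ 2) := Real.sqrt_nonneg _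
        nlinarith [mul_le_mul_of_nonneg_left (mul_le_mul h1 h1 h0 hNf0) hNu0]
      nlinarith [abs_nonneg (∫ x : ℝ, deriv u x * iteratedDeriv j f x ^ 2)]
    · by_cases hks : k = s
      · have hj' : j = s := by omega
        subst hj'; subst hks
        have heq : (fun x => iteratedDeriv k u x *
              (iteratedDeriv (k-k+1) f x * iteratedDeriv k f x))
            = fun x => iteratedDeriv 1 f x * (iteratedDeriv k u x * iteratedDeriv k f x) := by
          funext x
          rw [Nat.sub_self]
          ring_nf
        rw [heq]
        have hsup : ∀ x, |iteratedDeriv 1 f x| ≤ Nf :=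
          fun x => supD_le_Hnorm hf hcf (by omega) x
        have htri := tri (cDf 1) (cDu k) (cDf k) (sDu k) (sDf k) hsup
        refine le_trans htri ?_
        have h1 : Real.sqrt (∫ x : ℝ, iteratedDeriv k u x ^ 2) ≤ Nu := L2_le_Hnorm le_rfl u
        have h2 : Real.sqrt (∫ x : ℝ, iteratedDeriv k f x ^ 2) ≤ Nf := L2_le_Hnorm le_rfl f
        have h01 : 0 ≤ Real.sqrt (∫ x : ℝ, iteratedDeriv k u x ^ 2) := Real.sqrt_nonneg _
        have h02 : 0 ≤ Real.sqrt (∫ x : ℝ, iteratedDeriv k f x ^ 2) := Real.sqrt_nonneg _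
        nlinarith [mul_le_mul_of_nonneg_left (mul_le_mul h1 h2 h02 hNu0) hNf0]
      · have hk1 : k + 1 ≤ s := by omega
        have hjk : j - k + 1 ≤ s := by omega
        have hsup : ∀ x, |iteratedDeriv k u x| ≤ Nu :=
          fun x => supD_le_Hnorm hu hcu hk1 x
        have htri := tri (cDu k) (cDf (j-k+1)) (cDf j) (sDf (j-k+1)) (sDf j) hsup
        refine le_trans htri ?_
        have h1 : Real.sqrt (∫ x : ℝ, iteratedDeriv (j-k+1) f x ^ 2) ≤ Nf := L2_le_Hnorm hjk f
        have h2 : Real.sqrt (∫ x : ℝ, iteratedDeriv j f x ^ 2) ≤ Nf := L2_le_Hnorm hj f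
        have h01 : 0 ≤ Real.sqrt (∫ x : ℝ, iteratedDeriv (j-k+1) f x ^ 2) := Real.sqrt_nonneg _
        have h02 : 0 ≤ Real.sqrt (∫ x : ℝ, iteratedDeriv j f x ^ 2) := Real.sqrt_nonneg _
        nlinarith [mul_le_mul_of_nonneg_left (mul_le_mul h1 h2 h02 hNf0) hNu0]
  -- expansion of the inner product
  have hexp : Hinner s (fun x => u x * deriv f x) f
      = ∑ j ∈ Finset.range (s+1), ∑ k ∈ Finset.range (j+1), (j.choose k : ℝ) *
          ∫ x : ℝ, iteratedDeriv k u x * (iteratedDeriv (j-k+1) f x * iteratedDeriv j f x) := by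
    rw [Hinner]
    apply Finset.sum_congr rfl
    intro j _
    have hL := leibniz hu hf' j
    have hintg : (fun x => iteratedDeriv j (fun x => u x * deriv f x) x * iteratedDeriv j f x)
        = fun x => ∑ k ∈ Finset.range (j+1), (j.choose k : ℝ) *
            (iteratedDeriv k u x * (iteratedDeriv (j-k+1) f x * iteratedDeriv j f x)) := by
      funext x
      rw [hL]
      rw [Finset.sum_mul]
      apply Finset.sum_congr rfl
      intro k _
      rw [← iteratedDeriv_succ']
      ring
    rw [hintg]
    rw [integral_finset_sum _ (fun k _ => by
      exact (((cDu k).mul ((cDf (j-k+1)).mul (cDf j))).integrable_of_hasCompactSupport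
        (((sDf j).mul_left (f := iteratedDeriv (j-k+1) f)).mul_left
          (f := iteratedDeriv k u))).const_mul _)]
    apply Finset.sum_congr rfl
    intro k _
    exact integral_const_mul _ _
  rw [hexp]
  have hstep : |∑ j ∈ Finset.range (s+1), ∑ k ∈ Finset.range (j+1), (j.choose k : ℝ) *
      ∫ x : ℝ, iteratedDeriv k u x * (iteratedDeriv (j-k+1) f x * iteratedDeriv j f x)|
      ≤ ∑ j ∈ Finset.range (s+1), ∑ k ∈ Finset.range (j+1), (j.choose k : ℝ) * (Nu * Nf^2) := by
    refine le_trans (Finset.abs_sum_le_sum_abs _ _) ?_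
    apply Finset.sum_le_sum
    intro j hj
    refine le_trans (Finset.abs_sum_le_sum_abs _ _) ?_
    apply Finset.sum_le_sum
    intro k hk
    rw [abs_mul, Nat.abs_cast]
    exact mul_le_mul_of_nonneg_left
      (key j (Nat.lt_succ_iff.mp (Finset.mem_range.mp hj)) k
        (Nat.lt_succ_iff.mp (Finset.mem_range.mp hk)))
      (Nat.cast_nonneg _)
  refine le_trans hstep (le_of_eq (Eq.symm ?_))
  rw [mul_assoc, Finset.sum_mul]
  apply Finset.sum_congr rfl
  intro j _
  rw [Finset.sum_mul]
end

section
/- Given C > 0 and T₀ > 0, there exists ε₀ > 0 such that for every ε ∈ (0, ε₀), any C¹ function η : [0,T₀] → [0,∞) with η(0) = 0 satisfying η'(T) ≤ C(1 + η(T) + ε^{5/2} η(T)^{3/2}) for all T ∈ [0,T₀] obeys η(T) ≤ 2CT₀ e^{2CT₀} for all T ∈ [0,T₀]. -/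
/-!
Compare `η` with `u(t) = e^{2Ct} - 1`, the solution of `u' = 2C(u + 1)`, `u(0) = 0`. Since
`u ≤ e^{2CT₀}`, choosing `ε⁵ e^{2CT₀} ≤ 1` gives `ε^{5/2} u^{3/2} ≤ u`, so wherever `η` touches
`u` the hypothesis yields `η' ≤ C(1 + 2u) < u'`; hence `η` can never cross `u`. Finally
`e^y - 1 ≤ y e^y`.
-/

open Set Real

theorem Real.exp_sub_one_le_mul_exp (y : ℝ) : exp y - 1 ≤ y * exp y := by
  have h := mul_le_mul_of_nonneg_right (one_sub_le_exp_neg y) (exp_pos y).le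
  rw [← exp_add, neg_add_cancel, exp_zero] at h
  linarith

theorem Real.rpow_mul_rpow_one_add_le_self {δ x p : ℝ} (hδ : 0 ≤ δ) (hx : 0 ≤ x) (hp : 0 ≤ p)
    (hδx : δ * x ≤ 1) : δ ^ p * x ^ (1 + p) ≤ x := by
  calc δ ^ p * x ^ (1 + p) = (δ * x) ^ p * x := by
        rw [mul_rpow hδ hx, rpow_add' hx (by positivity), rpow_one]; ring
    _ ≤ 1 * x := by
        gcongr
        exact rpow_le_one (by positivity) hδx hp
    _ = x := one_mul x

theorem le_exp_mul_sub_one_of_hasDerivAt {K b : ℝ} {f f' : ℝ → ℝ}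
    (hf : ∀ x ∈ Icc 0 b, HasDerivAt f (f' x) x) (h0 : f 0 ≤ 0)
    (hbound : ∀ x ∈ Ico 0 b, f x = exp (K * x) - 1 → f' x < K * (f x + 1)) :
    ∀ x ∈ Icc 0 b, f x ≤ exp (K * x) - 1 := by
  have hu : ∀ x, HasDerivAt (fun t ↦ exp (K * t) - 1) (K * exp (K * x)) x := fun x ↦ by
    simpa [mul_comm] using (((hasDerivAt_id x).const_mul K).exp).sub_const 1
  refine image_le_of_deriv_right_lt_deriv_boundary
    (fun x hx ↦ (hf x hx).continuousAt.continuousWithinAt)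
    (fun x hx ↦ (hf x (Ico_subset_Icc_self hx)).hasDerivWithinAt)
    (by simpa using h0) hu fun x hx hfx ↦ ?_
  simpa [hfx] using hbound x hx hfx

theorem nonlinear_gronwall_general (C T₀ : ℝ) (hC : 0 < C) :
    ∃ ε₀ : ℝ, 0 < ε₀ ∧ ∀ ε ∈ Set.Ioo (0:ℝ) ε₀, ∀ η η' : ℝ → ℝ,
      η 0 = 0 →
      (∀ T ∈ Set.Icc (0:ℝ) T₀, 0 ≤ η T) →
      (∀ T ∈ Set.Icc (0:ℝ) T₀, HasDerivAt η (η' T) T) →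
      ContinuousOn η' (Set.Icc (0:ℝ) T₀) →
      (∀ T ∈ Set.Icc (0:ℝ) T₀,
        η' T ≤ C * (1 + η T + ε ^ ((5:ℝ)/2) * (η T) ^ ((3:ℝ)/2))) →
      ∀ T ∈ Set.Icc (0:ℝ) T₀, η T ≤ 2 * C * T₀ * Real.exp (2 * C * T₀) := by
  refine ⟨exp (-(2 * C * T₀) / 5), exp_pos _, ?_⟩
  rintro ε ⟨hε0, hεε₀⟩ η η' h0 - hd - hη'
  have hε5 : ε ^ 5 * exp (2 * C * T₀) ≤ 1 := by
    have h := pow_le_pow_left₀ hε0.le hεε₀.le 5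
    rw [← exp_nat_mul] at h
    calc ε ^ 5 * exp (2 * C * T₀) ≤ exp (-(2 * C * T₀)) * exp (2 * C * T₀) := by
          gcongr; convert h using 2; push_cast; ring
      _ = 1 := by rw [← exp_add, neg_add_cancel, exp_zero]
  have hcomp := le_exp_mul_sub_one_of_hasDerivAt (K := 2 * C) hd h0.le fun x ⟨hx0, hxT⟩ hηx ↦ by
    have hu0 : 0 ≤ η x := by rw [hηx, sub_nonneg]; exact one_le_exp (by positivity)
    have hsmall : ε ^ 5 * η x ≤ 1 := by
      refine le_trans ?_ hε5
      gcongr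
      rw [hηx]; linarith [exp_le_exp.2 (by gcongr : 2 * C * x ≤ 2 * C * T₀)]
    have hsuper : ε ^ ((5:ℝ)/2) * η x ^ ((3:ℝ)/2) ≤ η x := by
      have h := rpow_mul_rpow_one_add_le_self (by positivity) hu0 (by norm_num : (0:ℝ) ≤ 1/2)
        hsmall
      rwa [← rpow_natCast_mul hε0.le, show (1:ℝ) + 1/2 = 3/2 by norm_num,
        show ((5:ℕ):ℝ) * (1/2) = 5/2 by norm_num] at h
    calc η' x ≤ C * (1 + η x + ε ^ ((5:ℝ)/2) * η x ^ ((3:ℝ)/2)) := hη' x ⟨hx0, hxT.le⟩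
      _ ≤ C * (1 + 2 * η x) := mul_le_mul_of_nonneg_left (by linarith) hC.le
      _ < 2 * C * (η x + 1) := by linarith
  intro T ⟨hT0, hTT₀⟩
  calc η T ≤ exp (2 * C * T) - 1 := hcomp T ⟨hT0, hTT₀⟩
    _ ≤ 2 * C * T * exp (2 * C * T) := exp_sub_one_le_mul_exp _
    _ ≤ 2 * C * T₀ * exp (2 * C * T₀) := by gcongr; nlinarith

/-- Nonlinear Gronwall lemma.  Given `C, T₀ > 0` there is `ε₀ > 0` such that
for all `ε ∈ (0, ε₀)`, any `C¹` function `η : [0,T₀] → [0,∞)` with `η(0) = 0` and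
`η' ≤ C(1 + η + ε^{5/2} η^{3/2})` on `[0,T₀]` satisfies `η ≤ 2CT₀ e^{2CT₀}` on `[0,T₀]`. -/
theorem nonlinear_gronwall (C T₀ : ℝ) (hC : 0 < C) (hT₀ : 0 < T₀) :
    ∃ ε₀ : ℝ, 0 < ε₀ ∧ ∀ ε ∈ Set.Ioo (0:ℝ) ε₀, ∀ η η' : ℝ → ℝ,
      η 0 = 0 →
      (∀ T ∈ Set.Icc (0:ℝ) T₀, 0 ≤ η T) →
      (∀ T ∈ Set.Icc (0:ℝ) T₀, HasDerivAt η (η' T) T) →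
      ContinuousOn η' (Set.Icc (0:ℝ) T₀) →
      (∀ T ∈ Set.Icc (0:ℝ) T₀,
        η' T ≤ C * (1 + η T + ε ^ ((5:ℝ)/2) * (η T) ^ ((3:ℝ)/2))) →
      ∀ T ∈ Set.Icc (0:ℝ) T₀, η T ≤ 2 * C * T₀ * Real.exp (2 * C * T₀) :=
  nonlinear_gronwall_general C T₀ hC
end
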